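/- The complete graph K_4 violates the matching condition: there exists a matching M of size 2 in K_4, while the subgraph induced by the vertices covered by M (which is all of K_4) contains no independent set of size 2. Consequently, K_4 is not 0-1 strongly EFX-orientable. -/

import Mathlib

/-!
Let `e₁, e₂` be edges of `G` such that every endpoint of `e₁` is adjacent to every endpoint of
`e₂` (in `K₄`, any two disjoint edges), and let only the endpoints of `e₁` and `e₂` value them,
each at `1`. In an orientation let `v` be the head of `e₂` and `v'` its other endpoint, and let
`u` be the head of `e₁`. Agent `v'` gets nothing it values. If the edge `uv` points to `v`, then
`v` holds `uv` and `e₂`, and `v'` envies `v` even after `uv` is removed; if it points to `u`,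
the same happens with the roles of `e₁` and `e₂` exchanged. Hence no orientation is EFX.
-/

open SimpleGraph
open scoped Classical

variable {V : Type*}

def bundleSet (G : SimpleGraph V) (head : Sym2 V → V) (v : V) : Set (Sym2 V) :=
  {e ∈ G.edgeSet | head e = v}

def IsEFXOrientation (G : SimpleGraph V) (f : V → Set (Sym2 V) → NNReal)
    (head : Sym2 V → V) : Prop :=
  (∀ e ∈ G.edgeSet, head e ∈ e) ∧
  ∀ a b : V, ∀ g ∈ bundleSet G head b,
    f a (bundleSet G head b \ {g}) ≤ f a (bundleSet G head a)

def StronglyEFXOrientable [Fintype V] (G : SimpleGraph V) : Prop :=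
  ∀ f : V → Set (Sym2 V) → NNReal,
    (∀ a, Monotone (f a)) →
    (∀ a X, f a X = f a (X ∩ G.incidenceSet a)) →
    ∃ head : Sym2 V → V, IsEFXOrientation G f head

noncomputable def bundle [Fintype V] (G : SimpleGraph V) (head : Sym2 V → V) (v : V) :
    Finset (Sym2 V) :=
  Finset.univ.filter fun e => e ∈ G.edgeSet ∧ head e = v

def IsEFX01Orientation [Fintype V] (G : SimpleGraph V) (w : V → Sym2 V → ℕ)
    (head : Sym2 V → V) : Prop :=
  (∀ e ∈ G.edgeSet, head e ∈ e) ∧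
  ∀ a b : V, ∀ g ∈ bundle G head b,
    ∑ e ∈ (bundle G head b).erase g, w a e ≤ ∑ e ∈ bundle G head a, w a e

def ZeroOneStronglyEFXOrientable [Fintype V] (G : SimpleGraph V) : Prop :=
  ∀ w : V → Sym2 V → ℕ, (∀ a e, w a e ≤ 1) → (∀ a e, a ∉ e → w a e = 0) →
    ∃ head : Sym2 V → V, IsEFX01Orientation G w head

def IndepOn (G : SimpleGraph V) (s : Set V) : Prop :=
  ∀ a ∈ s, ∀ b ∈ s, ¬ G.Adj a b

/-- A matching: a set of edges of `G` that are pairwise vertex-disjoint. -/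
def IsMatchingSet (G : SimpleGraph V) (M : Finset (Sym2 V)) : Prop :=
  (∀ e ∈ M, e ∈ G.edgeSet) ∧
  ∀ e ∈ M, ∀ f ∈ M, e ≠ f → ∀ v : V, ¬(v ∈ e ∧ v ∈ f)

section

noncomputable def pairWeight (e₁ e₂ : Sym2 V) (a : V) (e : Sym2 V) : ℕ :=
  if (e = e₁ ∨ e = e₂) ∧ a ∈ e then 1 else 0

lemma pairWeight_le_one (e₁ e₂ : Sym2 V) (a : V) (e : Sym2 V) : pairWeight e₁ e₂ a e ≤ 1 := by
  unfold pairWeight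
  split <;> omega

lemma pairWeight_eq_zero_of_notMem {e₁ e₂ : Sym2 V} {a : V} {e : Sym2 V} (ha : a ∉ e) :
    pairWeight e₁ e₂ a e = 0 :=
  if_neg fun h => ha h.2

lemma pairWeight_right {e₁ e₂ : Sym2 V} {a : V} (ha : a ∈ e₂) : pairWeight e₁ e₂ a e₂ = 1 :=
  if_pos ⟨Or.inr rfl, ha⟩

lemma pairWeight_comm (e₁ e₂ : Sym2 V) : pairWeight (V := V) e₁ e₂ = pairWeight e₂ e₁ := by
  ext a e
  simp only [pairWeight, or_comm]

lemma notMem_of_forall_adj {G : SimpleGraph V} {e₁ e₂ : Sym2 V}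
    (hadj : ∀ x ∈ e₁, ∀ y ∈ e₂, G.Adj x y) {x : V} (hx : x ∈ e₂) : x ∉ e₁ :=
  fun hx₁ => G.irrefl (hadj x hx₁ x hx)

variable [Fintype V] {G : SimpleGraph V} {head : Sym2 V → V}

lemma mem_bundle {v : V} {e : Sym2 V} :
    e ∈ bundle G head v ↔ e ∈ G.edgeSet ∧ head e = v := by
  simp [bundle]

lemma IsEFX01Orientation.eq_zero_of_sum_bundle_eq_zero {w : V → Sym2 V → ℕ}
    (hEFX : IsEFX01Orientation G w head) {a b : V} {e g : Sym2 V}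
    (ha : ∑ e ∈ bundle G head a, w a e = 0) (he : e ∈ bundle G head b)
    (hg : g ∈ bundle G head b) (hne : e ≠ g) : w a e = 0 := by
  have henvy := hEFX.2 a b g hg
  rw [ha, Nat.le_zero, Finset.sum_eq_zero_iff] at henvy
  exact henvy e (Finset.mem_erase.mpr ⟨hne, he⟩)

lemma sum_bundle_pairWeight_eq_zero {e₁ e₂ : Sym2 V} {a : V} (ha : a ∉ e₁)
    (hhead : head e₂ ≠ a) : ∑ e ∈ bundle G head a, pairWeight e₁ e₂ a e = 0 := by
  refine Finset.sum_eq_zero fun e he => if_neg ?_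
  rintro ⟨rfl | rfl, hae⟩
  · exact ha hae
  · exact hhead (mem_bundle.mp he).2

lemma not_isEFX01Orientation_of_head_eq {e₁ e₂ : Sym2 V} (h₂ : e₂ ∈ G.edgeSet)
    (hadj : ∀ x ∈ e₁, ∀ y ∈ e₂, G.Adj x y) {u : V} (hu : u ∈ e₁)
    (hhead : head s(u, head e₂) = head e₂) :
    ¬ IsEFX01Orientation G (pairWeight e₁ e₂) head := by
  intro hEFX
  set v := head e₂
  have hv : v ∈ e₂ := hEFX.1 e₂ h₂
  set v' := Sym2.Mem.other hv
  have hv' : v' ∈ e₂ := Sym2.other_mem hv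
  have hvv' : v ≠ v' := (Sym2.other_ne (G.not_isDiag_of_mem_edgeSet h₂) hv).symm
  have hv'_zero : ∑ e ∈ bundle G head v', pairWeight e₁ e₂ v' e = 0 :=
    sum_bundle_pairWeight_eq_zero (notMem_of_forall_adj hadj hv') hvv'
  have huv : s(u, v) ∈ bundle G head v := mem_bundle.mpr ⟨hadj u hu v hv, hhead⟩
  have he₂ : e₂ ∈ bundle G head v := mem_bundle.mpr ⟨h₂, rfl⟩
  have hne : e₂ ≠ s(u, v) := fun h =>
    notMem_of_forall_adj hadj (h ▸ Sym2.mem_mk_left u v : u ∈ e₂) hu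
  have hv'_envy := hEFX.eq_zero_of_sum_bundle_eq_zero hv'_zero he₂ huv hne
  rw [pairWeight_right hv'] at hv'_envy
  exact one_ne_zero hv'_envy

theorem not_zeroOneStronglyEFXOrientable_of_forall_adj {e₁ e₂ : Sym2 V}
    (h₁ : e₁ ∈ G.edgeSet) (h₂ : e₂ ∈ G.edgeSet) (hadj : ∀ x ∈ e₁, ∀ y ∈ e₂, G.Adj x y) :
    ¬ ZeroOneStronglyEFXOrientable G := by
  intro hG
  obtain ⟨head, hEFX⟩ := hG (pairWeight e₁ e₂) (pairWeight_le_one e₁ e₂)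
    fun _ _ => pairWeight_eq_zero_of_notMem
  have hu : head e₁ ∈ e₁ := hEFX.1 e₁ h₁
  have hv : head e₂ ∈ e₂ := hEFX.1 e₂ h₂
  rcases Sym2.mem_iff.mp (hEFX.1 _ (hadj _ hu _ hv)) with h | h
  · refine not_isEFX01Orientation_of_head_eq h₁ (fun y hy x hx => (hadj x hx y hy).symm) hv
      ?_ (pairWeight_comm e₁ e₂ ▸ hEFX)
    rwa [Sym2.eq_swap]
  · exact not_isEFX01Orientation_of_head_eq h₂ hadj hu h hEFX

end

/-- The complete graph `K₄` violates the matching condition: it has a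
matching `M` of size 2, while the subgraph induced by the vertices covered by `M` contains
no independent set of size 2. Consequently, `K₄` is not 0-1 strongly EFX-orientable. -/
theorem K4_violates_matching_condition :
    (∃ M : Finset (Sym2 (Fin 4)), IsMatchingSet (completeGraph (Fin 4)) M ∧ M.card = 2 ∧
      ¬ ∃ I : Finset (Fin 4), I.card = 2 ∧ (∀ x ∈ I, ∃ e ∈ M, x ∈ e) ∧
        ∀ a ∈ I, ∀ b ∈ I, ¬ (completeGraph (Fin 4)).Adj a b) ∧
    ¬ ZeroOneStronglyEFXOrientable (completeGraph (Fin 4)) := by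
  refine ⟨⟨{s(0, 1), s(2, 3)}, ⟨by simp, by simp⟩, by decide, ?_⟩, ?_⟩
  · rintro ⟨I, hcard, -, hindep⟩
    obtain ⟨a, ha, b, hb, hab⟩ := Finset.one_lt_card.mp (by omega : 1 < I.card)
    exact hindep a ha b hb hab
  · exact not_zeroOneStronglyEFXOrientable_of_forall_adj (e₁ := s(0, 1)) (e₂ := s(2, 3))
      (by simp) (by simp) (by simp)
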